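/- arXiv:1607.02045 — 3 statements merged into one kernel-verified Lean document; each statement's English description precedes it below -/
import Mathlib

section
/- Let G be a finite simple graph on a vertex set V in which every vertex has degree at most D_max, let A and B be adjacent vertices of G, and let P ≥ 2·D_max. Suppose f is a partial assignment of slots to directed links, i.e., a function assigning to some ordered pairs of adjacent vertices a value in Fin P (formally f : V → V → Option (Fin P) with f u v = none whenever u and v are not adjacent), and suppose f leaves the link (A,B) unassigned. Let Rslot_A ⊆ Fin P be the set of slots assigned by f to links whose destination is A, and let Tslot_B ⊆ Fin P be the set of slots assigned by f to links whose source is B. Then the feasible slot set Fin P \ (Rslot_A ∪ Tslot_B) is nonempty. -/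
/-!
Every slot reserved around the link `(A, B)` is the slot of an in-link of `A` or of an out-link
of `B`, so at most `deg A + deg B ≤ 2 D_max` slots are blocked, and one fewer always suffices:
either the reverse link `(B, A)` carries a slot, which is then counted on both sides, or it
carries none, and then at most `deg A - 1` in-links of `A` are assigned. Hence fewer than `P`
slots are blocked.
-/

open Finset

section SlotSets

variable {V β : Type*} [Fintype V] [Fintype β] [DecidableEq β]

theorem card_filter_exists_eq_some_le {α : Type*} [Fintype α] (g : α → Option β) (s : Finset α)
    (hs : ∀ x, g x ≠ none → x ∈ s) : #{b | ∃ x, g x = some b} ≤ #s := by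
  refine card_le_card_of_forall_subsingleton (fun b x => g x = some b) ?_ ?_
  · rintro b hb
    obtain ⟨x, hx⟩ := (mem_filter.1 hb).2
    exact ⟨x, hs x (by simp [hx]), hx⟩
  · rintro x - b₁ ⟨-, h₁⟩ b₂ ⟨-, h₂⟩
    exact Option.some_injective β (h₁.symm.trans h₂)

def Rslot (f : V → V → Option β) (v : V) : Finset β := {s | ∃ x, f x v = some s}

def Tslot (f : V → V → Option β) (v : V) : Finset β := {s | ∃ y, f v y = some s}

end SlotSets

namespace SimpleGraph

variable {V β : Type*} [Fintype V] [Fintype β] [DecidableEq β]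
  {G : SimpleGraph V} [DecidableRel G.Adj] {f : V → V → Option β}

theorem card_tslot_le_degree (hadj : ∀ u v, ¬ G.Adj u v → f u v = none) (v : V) :
    #(Tslot f v) ≤ G.degree v := by
  rw [← card_neighborFinset_eq_degree]
  refine card_filter_exists_eq_some_le (f v) _ fun y hy => ?_
  rw [mem_neighborFinset]
  exact not_not.1 (mt (hadj v y) hy)

theorem card_rslot_le_degree (hadj : ∀ u v, ¬ G.Adj u v → f u v = none) (v : V) :
    #(Rslot f v) ≤ G.degree v := by
  rw [← card_neighborFinset_eq_degree]
  refine card_filter_exists_eq_some_le (f · v) _ fun x hx => ?_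
  rw [mem_neighborFinset]
  exact (not_not.1 (mt (hadj x v) hx)).symm

theorem card_rslot_lt_degree [DecidableEq V] (hadj : ∀ u v, ¬ G.Adj u v → f u v = none)
    {u v : V} (huv : G.Adj v u) (hnone : f u v = none) : #(Rslot f v) < G.degree v := by
  have hu : u ∈ G.neighborFinset v := (mem_neighborFinset G v u).2 huv
  have hle : #(Rslot f v) ≤ #((G.neighborFinset v).erase u) := by
    refine card_filter_exists_eq_some_le (f · v) _ fun x hx => mem_erase.2 ⟨?_, ?_⟩
    · rintro rfl
      exact hx hnone
    · rw [mem_neighborFinset]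
      exact (not_not.1 (mt (hadj x v) hx)).symm
  rw [card_erase_of_mem hu, card_neighborFinset_eq_degree] at hle
  have : 0 < G.degree v := (G.degree_pos_iff_exists_adj v).2 ⟨u, huv⟩
  omega

theorem card_rslot_union_tslot_lt [DecidableEq V] (hadj : ∀ u v, ¬ G.Adj u v → f u v = none)
    {A B : V} (hAB : G.Adj A B) : #(Rslot f A ∪ Tslot f B) < G.degree A + G.degree B := by
  have hT := card_tslot_le_degree hadj B
  rcases hBA : f B A with _ | t
  · calc #(Rslot f A ∪ Tslot f B) ≤ #(Rslot f A) + #(Tslot f B) := card_union_le _ _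
      _ < G.degree A + G.degree B := by
        have := card_rslot_lt_degree hadj hAB hBA
        omega
  · have ht : t ∈ Rslot f A ∩ Tslot f B := by
      simp only [Rslot, Tslot, mem_inter, mem_filter, mem_univ, true_and]
      exact ⟨⟨B, hBA⟩, ⟨A, hBA⟩⟩
    have hinter : 0 < #(Rslot f A ∩ Tslot f B) := card_pos.2 ⟨t, ht⟩
    have := card_union_add_card_inter (Rslot f A) (Tslot f B)
    have := card_rslot_le_degree hadj A
    omega

end SimpleGraph

theorem feasible_slot_exists_general {V : Type*} [Fintype V] [DecidableEq V]
    (G : SimpleGraph V) [DecidableRel G.Adj] (D_max P : ℕ)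
    (hdeg : ∀ v : V, G.degree v ≤ D_max) (hP : 2 * D_max ≤ P)
    (A B : V) (hAB : G.Adj A B)
    (f : V → V → Option (Fin P))
    (hadj : ∀ u v : V, ¬ G.Adj u v → f u v = none) :
    ((Finset.univ : Finset (Fin P)) \
      ((Finset.univ.filter fun s : Fin P => ∃ x : V, f x A = some s) ∪
       (Finset.univ.filter fun s : Fin P => ∃ y : V, f B y = some s))).Nonempty := by
  have hblocked : #(Rslot f A ∪ Tslot f B) < #(univ : Finset (Fin P)) :=
    calc #(Rslot f A ∪ Tslot f B) < G.degree A + G.degree B :=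
          G.card_rslot_union_tslot_lt hadj hAB
      _ ≤ 2 * D_max := by linarith [hdeg A, hdeg B]
      _ ≤ #(univ : Finset (Fin P)) := by rwa [card_univ, Fintype.card_fin]
  exact sdiff_nonempty_of_card_lt_card hblocked

/-- Proposition 1 of the paper: in a graph of maximum degree `D_max`, with period
`P ≥ 2·D_max`, any partial assignment of slots to directed links that leaves the
link `(A,B)` unassigned still leaves a feasible slot for `(A,B)`, i.e.
`Fin P \ (Rslot_A ∪ Tslot_B)` is nonempty. -/
theorem feasible_slot_exists {V : Type*} [Fintype V] [DecidableEq V]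
    (G : SimpleGraph V) [DecidableRel G.Adj] (D_max P : ℕ)
    (hdeg : ∀ v : V, G.degree v ≤ D_max) (hP : 2 * D_max ≤ P)
    (A B : V) (hAB : G.Adj A B)
    (f : V → V → Option (Fin P))
    (hadj : ∀ u v : V, ¬ G.Adj u v → f u v = none)
    (hunassigned : f A B = none) :
    ((Finset.univ : Finset (Fin P)) \
      ((Finset.univ.filter fun s : Fin P => ∃ x : V, f x A = some s) ∪
       (Finset.univ.filter fun s : Fin P => ∃ y : V, f B y = some s))).Nonempty :=
  feasible_slot_exists_general G D_max P hdeg hP A B hAB f hadj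
end

section
/- Let G be a finite simple graph on a vertex set V in which every vertex has degree at most D_max, let A and B be adjacent vertices of G, and let f be a partial assignment of slots to directed links (a function f : V → V → Option (Fin P) with f u v = none whenever u and v are not adjacent) that leaves the link (A,B) unassigned. Let Rslot_A be the set of slots assigned by f to links whose destination is A and Tslot_B the set of slots assigned by f to links whose source is B. Then |Rslot_A ∪ Tslot_B| ≤ 2·D_max − 1. -/
open Finset

theorem card_filter_exists_mem_eq_some_le {V α : Type*} [Fintype α] [DecidableEq α]
    (g : V → Option α) (s : Finset V) :
    (univ.filter fun a : α => ∃ v ∈ s, g v = some a).card ≤ s.card := by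
  calc (univ.filter fun a : α => ∃ v ∈ s, g v = some a).card
      = ((univ.filter fun a : α => ∃ v ∈ s, g v = some a).map Function.Embedding.some).card :=
        (card_map _).symm
    _ ≤ (s.image g).card := by
        refine card_le_card fun o ho => ?_
        obtain ⟨a, ha, rfl⟩ := mem_map.mp ho
        obtain ⟨v, hv, hva⟩ := (mem_filter.mp ha).2
        exact mem_image.mpr ⟨v, hv, hva⟩
    _ ≤ s.card := card_image_le

theorem slot_union_card_bound_general {V : Type*} [Fintype V]
    (G : SimpleGraph V) [DecidableRel G.Adj] (D_max P : ℕ)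
    (hdeg : ∀ v : V, G.degree v ≤ D_max)
    (A B : V) (hAB : G.Adj A B)
    (f : V → V → Option (Fin P))
    (hadj : ∀ u v : V, ¬ G.Adj u v → f u v = none) :
    ((Finset.univ.filter fun s : Fin P => ∃ x : V, f x A = some s) ∪
     (Finset.univ.filter fun s : Fin P => ∃ y : V, f B y = some s)).card
      ≤ 2 * D_max - 1 := by
  classical
  have adj_of_eq_some {u v : V} {s : Fin P} (h : f u v = some s) : G.Adj u v :=
    not_not.mp fun hn => by simp [hadj u v hn] at h
  -- A slot on the reverse link `(B, A)` is already counted in `Tslot_B`.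
  have hsub : ((univ.filter fun s : Fin P => ∃ x : V, f x A = some s) ∪
      (univ.filter fun s : Fin P => ∃ y : V, f B y = some s)) ⊆
      (univ.filter fun s => ∃ x ∈ (G.neighborFinset A).erase B, f x A = some s) ∪
      (univ.filter fun s => ∃ y ∈ G.neighborFinset B, f B y = some s) := by
    intro s hs
    simp only [mem_union, mem_filter, mem_univ, true_and, mem_erase,
      SimpleGraph.mem_neighborFinset] at hs ⊢
    rcases hs with ⟨x, hx⟩ | ⟨y, hy⟩
    · by_cases hxB : x = B
      · subst hxB
        exact Or.inr ⟨A, hAB.symm, hx⟩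
      · exact Or.inl ⟨x, ⟨hxB, (adj_of_eq_some hx).symm⟩, hx⟩
    · exact Or.inr ⟨y, adj_of_eq_some hy, hy⟩
  have herase := card_erase_add_one ((G.mem_neighborFinset A B).mpr hAB)
  rw [G.card_neighborFinset_eq_degree] at herase
  have := hdeg A
  have := hdeg B
  calc _ ≤ _ := card_le_card hsub
    _ ≤ _ := card_union_le _ _
    _ ≤ ((G.neighborFinset A).erase B).card + (G.neighborFinset B).card :=
        add_le_add (card_filter_exists_mem_eq_some_le _ _) (card_filter_exists_mem_eq_some_le _ _)
    _ ≤ 2 * D_max - 1 := by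
        rw [G.card_neighborFinset_eq_degree]
        omega

/-- Intermediate cardinality bound in the proof of Proposition 1: if the link `(A,B)`
is unassigned, then `|Rslot_A ∪ Tslot_B| ≤ 2·D_max − 1`. -/
theorem slot_union_card_bound {V : Type*} [Fintype V] [DecidableEq V]
    (G : SimpleGraph V) [DecidableRel G.Adj] (D_max P : ℕ)
    (hdeg : ∀ v : V, G.degree v ≤ D_max)
    (A B : V) (hAB : G.Adj A B)
    (f : V → V → Option (Fin P))
    (hadj : ∀ u v : V, ¬ G.Adj u v → f u v = none)
    (hunassigned : f A B = none) :
    ((Finset.univ.filter fun s : Fin P => ∃ x : V, f x A = some s) ∪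
     (Finset.univ.filter fun s : Fin P => ∃ y : V, f B y = some s)).card
      ≤ 2 * D_max - 1 :=
  slot_union_card_bound_general G D_max P hdeg A B hAB f hadj
end

section
/- For every finite simple graph G in which every vertex has degree at most D_max, there exists a complete link schedule of length P = 2·D_max, i.e., a function f assigning to every ordered pair of adjacent vertices (u,v) a slot f(u,v) ∈ Fin (2·D_max), such that the schedule is interference-free: for every vertex v there is no slot s that is simultaneously the slot of some link with source v and the slot of some link with destination v. -/
/-!
Call two directed links conflicting when one ends where the other starts. A schedule is
interference-free exactly when it properly colors this conflict graph with slots. A link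
`(u, v)` conflicts only with links leaving `v` or entering `u`; there are at most
`deg v + deg u` of these, and the reverse link `(v, u)` is counted twice, so every link has
fewer than `2·D_max` conflicts and a greedy coloring with `2·D_max` slots exists.
-/

open Finset Function

namespace SimpleGraph

variable {V : Type*} (G : SimpleGraph V)

section Greedy

variable [Fintype V] [DecidableRel G.Adj] {n : ℕ}

lemma exists_color_ne_neighbors (hdeg : ∀ v, G.degree v < n) (c : V → Fin n) (a : V) :
    ∃ k : Fin n, ∀ b, G.Adj a b → c b ≠ k := by
  have hlt : #((G.neighborFinset a).image c) < #(univ : Finset (Fin n)) := by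
    rw [card_univ, Fintype.card_fin]
    exact card_image_le.trans_lt (G.card_neighborFinset_eq_degree a ▸ hdeg a)
  obtain ⟨k, -, hk⟩ := exists_mem_notMem_of_card_lt_card hlt
  exact ⟨k, fun b hab hbk => hk (mem_image.2 ⟨b, (G.mem_neighborFinset a b).2 hab, hbk⟩)⟩

theorem colorable_of_forall_degree_lt (hdeg : ∀ v, G.degree v < n) : G.Colorable n := by
  suffices ∀ s : Finset V, ∃ c : V → Fin n, ∀ x ∈ s, ∀ y ∈ s, G.Adj x y → c x ≠ c y by
    obtain ⟨c, hc⟩ := this univ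
    exact ⟨Coloring.mk c fun hxy => hc _ (mem_univ _) _ (mem_univ _) hxy⟩
  classical
  intro s
  induction s using Finset.induction_on with
  | empty => exact ⟨fun v => ⟨0, (Nat.zero_le _).trans_lt (hdeg v)⟩, by simp⟩
  | insert a s ha ih =>
    obtain ⟨c, hc⟩ := ih
    obtain ⟨k, hk⟩ := G.exists_color_ne_neighbors hdeg c a
    have hnew : ∀ y, G.Adj a y → update c a k a ≠ update c a k y := fun y hay => by
      rw [update_self, update_of_ne hay.ne']
      exact (hk y hay).symm
    refine ⟨update c a k, fun x hx y hy hxy => ?_⟩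
    rcases mem_insert.1 hx with rfl | hx <;> rcases mem_insert.1 hy with rfl | hy
    · exact absurd hxy (G.loopless.irrefl _)
    · exact hnew y hxy
    · exact (hnew x hxy.symm).symm
    · rw [update_of_ne (ne_of_mem_of_not_mem hx ha), update_of_ne (ne_of_mem_of_not_mem hy ha)]
      exact hc x hx y hy hxy

end Greedy

def dartConflictGraph : SimpleGraph G.Dart := fromRel G.DartAdj

section Degree

variable [Fintype V] [DecidableEq V] [DecidableRel G.Adj]

theorem dart_snd_fiber_card_eq_degree (v : V) : #{d : G.Dart | d.snd = v} = G.degree v := by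
  rw [← G.dart_fst_fiber_card_eq_degree v]
  refine card_nbij' Dart.symm Dart.symm ?_ ?_ (fun d _ => d.symm_symm) (fun d _ => d.symm_symm) <;>
    intro d hd <;> simpa using hd

theorem degree_dartConflictGraph_add_one_le [DecidableRel G.dartConflictGraph.Adj] (d : G.Dart) :
    G.dartConflictGraph.degree d + 1 ≤ G.degree d.fst + G.degree d.snd := by
  set S : Finset G.Dart := {e | e.snd = d.fst}
  set T : Finset G.Dart := {e | e.fst = d.snd}
  have hsub : G.dartConflictGraph.neighborFinset d ⊆ S ∪ T := by
    intro e he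
    obtain ⟨-, h | h⟩ := (G.dartConflictGraph.mem_neighborFinset d e).1 he
    · exact mem_union_right _ (mem_filter.2 ⟨mem_univ _, h.symm⟩)
    · exact mem_union_left _ (mem_filter.2 ⟨mem_univ _, h⟩)
  have hsymm : d.symm ∈ S ∩ T := by simp [S, T]
  calc G.dartConflictGraph.degree d + 1
      ≤ #(S ∪ T) + #(S ∩ T) := by
        rw [← card_neighborFinset_eq_degree]
        exact add_le_add (card_le_card hsub) (card_pos.2 ⟨_, hsymm⟩)
    _ = G.degree d.fst + G.degree d.snd := by
        rw [card_union_add_card_inter, G.dart_snd_fiber_card_eq_degree,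
          G.dart_fst_fiber_card_eq_degree]

end Degree

end SimpleGraph

open SimpleGraph in
/-- Proposition 1 applied greedily: every finite simple graph with maximum degree at
most `D_max` admits a complete interference-free link schedule of length `2·D_max`:
no vertex both transmits and receives in the same slot. -/
theorem complete_schedule_exists {V : Type*} [Fintype V]
    (G : SimpleGraph V) [DecidableRel G.Adj] (D_max : ℕ)
    (hdeg : ∀ v : V, G.degree v ≤ D_max) :
    ∃ f : ∀ u v : V, G.Adj u v → Fin (2 * D_max),
      ∀ (v : V) (s : Fin (2 * D_max)),
        ¬ ((∃ x : V, ∃ h : G.Adj v x, f v x h = s) ∧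
           (∃ y : V, ∃ h : G.Adj y v, f y v h = s)) := by
  classical
  have hconflict : ∀ d, G.dartConflictGraph.degree d < 2 * D_max := fun d => by
    have := G.degree_dartConflictGraph_add_one_le d
    have := hdeg d.fst
    have := hdeg d.snd
    omega
  obtain ⟨C⟩ := G.dartConflictGraph.colorable_of_forall_degree_lt hconflict
  refine ⟨fun u v h => C ⟨(u, v), h⟩, ?_⟩
  rintro v s ⟨⟨x, hvx, rfl⟩, ⟨y, hyv, hs⟩⟩
  have hadj : G.dartConflictGraph.Adj ⟨(y, v), hyv⟩ ⟨(v, x), hvx⟩ :=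
    ⟨fun h => hyv.ne (congrArg (·.fst) h), Or.inl rfl⟩
  exact C.valid hadj hs
end
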